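/- arXiv:0808.4156 — 4 statements merged into one kernel-verified Lean document; each statement's English description precedes it below -/
import Mathlib

section
/- Let P be a stochastic matrix on a nonempty finite state space S, and let μ and ν be probability distributions on S. Then for every integer t ≥ 0, ‖μP^t − νP^t‖₁ ≤ ‖μ − ν‖₁ · δ(P)^t. -/
/-- The ℓ¹ distance between two vectors on a finite index set. -/
noncomputable def l1 {S : Type*} [Fintype S] (u v : S → ℝ) : ℝ :=
  ∑ k, |u k - v k|

/-- A stochastic matrix: nonnegative entries, rows summing to 1. -/
def IsStochastic {S : Type*} [Fintype S] (P : Matrix S S ℝ) : Prop :=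
  (∀ i k, 0 ≤ P i k) ∧ ∀ i, ∑ k, P i k = 1

/-- A probability distribution (row vector) on a finite state space. -/
def IsDist {S : Type*} [Fintype S] (μ : S → ℝ) : Prop :=
  (∀ k, 0 ≤ μ k) ∧ ∑ k, μ k = 1

/-- Dobrushin's ergodic coefficient: the maximum total-variation distance
between two rows of `P`. -/
noncomputable def dobrushin {S : Type*} [Fintype S] (P : Matrix S S ℝ) : ℝ :=
  ⨆ p : S × S, l1 (P p.1) (P p.2) / 2

/-!
By ℓ¹–ℓ∞ duality, `‖(μ - ν) P‖₁ = (μ - ν) ⬝ (P s)` for the sign vector `s` of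
`(μ - ν) P`. Since `μ - ν` has total mass zero, pairing it with `g = P s` only sees the
oscillation of `g`, at cost `‖μ - ν‖₁ · osc(g) / 2`, and
`g i - g j = (p_i - p_j) ⬝ s ≤ ‖p_i - p_j‖₁ ≤ 2 δ(P)`.
This one-step contraction iterates because `P` preserves total mass.
-/

open Finset Matrix

section

variable {S : Type*} [Fintype S]

lemma l1_le_two_mul_dobrushin (P : Matrix S S ℝ) (i j : S) :
    l1 (P i) (P j) ≤ 2 * dobrushin P := by
  have := le_ciSup (f := fun p : S × S => l1 (P p.1) (P p.2) / 2)
    (Set.finite_range _).bddAbove (i, j)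
  dsimp only at this
  unfold dobrushin
  linarith

lemma dobrushin_nonneg (P : Matrix S S ℝ) : 0 ≤ dobrushin P :=
  Real.iSup_nonneg fun _ => div_nonneg (sum_nonneg fun _ _ => abs_nonneg _) zero_le_two

lemma sum_abs_eq_dotProduct_sign (v : S → ℝ) :
    ∑ k, |v k| = v ⬝ᵥ fun k => (SignType.sign (v k) : ℝ) := by
  simp only [dotProduct, self_mul_sign]

lemma dotProduct_sub_dotProduct_le_l1 (u v s : S → ℝ) (hs : ∀ k, |s k| ≤ 1) :
    u ⬝ᵥ s - v ⬝ᵥ s ≤ l1 u v := by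
  rw [← sub_dotProduct, l1]
  refine sum_le_sum fun k _ => ?_
  calc (u k - v k) * s k ≤ |(u k - v k) * s k| := le_abs_self _
    _ = |u k - v k| * |s k| := abs_mul _ _
    _ ≤ |u k - v k| := mul_le_of_le_one_right (abs_nonneg _) (hs k)

lemma dotProduct_le_of_sum_eq_zero {φ g : S → ℝ} (hφ : ∑ i, φ i = 0) {D : ℝ}
    (hg : ∀ i j, g i - g j ≤ D) : φ ⬝ᵥ g ≤ (∑ i, |φ i|) * D / 2 := by
  cases isEmpty_or_nonempty S
  · simp
  obtain ⟨imax, himax⟩ := Finite.exists_max g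
  obtain ⟨imin, himin⟩ := Finite.exists_min g
  -- Centre `g` at the midpoint of its range: this does not change `φ ⬝ᵥ g` as `∑ φ = 0`.
  set m := (g imax + g imin) / 2 with hm
  have hcentre : ∀ i, |g i - m| ≤ D / 2 := fun i => by
    have := hg imax imin
    have := himax i
    have := himin i
    rw [abs_le, hm]; constructor <;> linarith
  calc φ ⬝ᵥ g = ∑ i, φ i * (g i - m) := by
        simp only [dotProduct, mul_sub, sum_sub_distrib, ← sum_mul, hφ, zero_mul, sub_zero]
    _ ≤ ∑ i, |φ i| * (D / 2) := sum_le_sum fun i _ => by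
        calc φ i * (g i - m) ≤ |φ i * (g i - m)| := le_abs_self _
          _ = |φ i| * |g i - m| := abs_mul _ _
          _ ≤ |φ i| * (D / 2) := mul_le_mul_of_nonneg_left (hcentre i) (abs_nonneg _)
    _ = (∑ i, |φ i|) * D / 2 := by rw [← sum_mul]; ring

lemma l1_vecMul_le_mul_dobrushin (P : Matrix S S ℝ) {μ ν : S → ℝ}
    (hμν : ∑ i, μ i = ∑ i, ν i) : l1 (μ ᵥ* P) (ν ᵥ* P) ≤ l1 μ ν * dobrushin P := by
  set φ := μ - ν
  set s : S → ℝ := fun k => SignType.sign ((φ ᵥ* P) k)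
  have hφ : ∑ i, φ i = 0 := by simp only [φ, Pi.sub_apply, sum_sub_distrib, hμν, sub_self]
  have hs : ∀ k, |s k| ≤ 1 := fun k => by
    rcases lt_trichotomy ((φ ᵥ* P) k) 0 with h | h | h <;> simp [s, h]
  calc l1 (μ ᵥ* P) (ν ᵥ* P) = φ ⬝ᵥ (P *ᵥ s) := by
        rw [dotProduct_mulVec, ← sum_abs_eq_dotProduct_sign, sub_vecMul]; rfl
    _ ≤ (∑ i, |φ i|) * (2 * dobrushin P) / 2 :=
        dotProduct_le_of_sum_eq_zero hφ fun i j =>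
          (dotProduct_sub_dotProduct_le_l1 (P i) (P j) s hs).trans
            (l1_le_two_mul_dobrushin P i j)
    _ = l1 μ ν * dobrushin P := by simp only [l1, φ, Pi.sub_apply]; ring

lemma sum_vecMul_of_sum_row_eq_one {P : Matrix S S ℝ} (hP : ∀ i, ∑ k, P i k = 1)
    (ψ : S → ℝ) : ∑ k, (ψ ᵥ* P) k = ∑ i, ψ i := by
  simp only [vecMul, dotProduct]
  rw [sum_comm]
  simp only [← mul_sum, hP, mul_one]

lemma sum_vecMul_pow_of_sum_row_eq_one [DecidableEq S] {P : Matrix S S ℝ}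
    (hP : ∀ i, ∑ k, P i k = 1) (ψ : S → ℝ) (t : ℕ) : ∑ k, (ψ ᵥ* (P ^ t)) k = ∑ i, ψ i := by
  induction t with
  | zero => simp
  | succ t ih => rw [pow_succ, ← vecMul_vecMul, sum_vecMul_of_sum_row_eq_one hP, ih]

end

theorem l1_vecMul_pow_le_of_isStochastic_general {S : Type*} [Fintype S]
    [DecidableEq S] (P : Matrix S S ℝ) (hP : IsStochastic P)
    (μ ν : S → ℝ) (hμ : IsDist μ) (hν : IsDist ν) (t : ℕ) :
    l1 (Matrix.vecMul μ (P ^ t)) (Matrix.vecMul ν (P ^ t)) ≤ l1 μ ν * dobrushin P ^ t := by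
  induction t with
  | zero => simp [l1]
  | succ t ih =>
    have hmass : ∑ i, (μ ᵥ* P ^ t) i = ∑ i, (ν ᵥ* P ^ t) i := by
      rw [sum_vecMul_pow_of_sum_row_eq_one hP.2, sum_vecMul_pow_of_sum_row_eq_one hP.2,
        hμ.2, hν.2]
    calc l1 (μ ᵥ* P ^ (t + 1)) (ν ᵥ* P ^ (t + 1))
        = l1 ((μ ᵥ* P ^ t) ᵥ* P) ((ν ᵥ* P ^ t) ᵥ* P) := by
          rw [pow_succ, vecMul_vecMul, vecMul_vecMul]
      _ ≤ l1 (μ ᵥ* P ^ t) (ν ᵥ* P ^ t) * dobrushin P := l1_vecMul_le_mul_dobrushin P hmass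
      _ ≤ l1 μ ν * dobrushin P ^ t * dobrushin P :=
        mul_le_mul_of_nonneg_right ih (dobrushin_nonneg P)
      _ = l1 μ ν * dobrushin P ^ (t + 1) := by rw [pow_succ, mul_assoc]

/-- Convergence rate in terms of Dobrushin's coefficient:
`‖μP^t − νP^t‖₁ ≤ ‖μ − ν‖₁ · δ(P)^t`. -/
theorem l1_vecMul_pow_le_of_isStochastic {S : Type*} [Fintype S] [Nonempty S]
    [DecidableEq S] (P : Matrix S S ℝ) (hP : IsStochastic P)
    (μ ν : S → ℝ) (hμ : IsDist μ) (hν : IsDist ν) (t : ℕ) :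
    l1 (Matrix.vecMul μ (P ^ t)) (Matrix.vecMul ν (P ^ t)) ≤ l1 μ ν * dobrushin P ^ t :=
  l1_vecMul_pow_le_of_isStochastic_general P hP μ ν hμ hν t
end

section
/- Sufficient condition for strong ergodicity: let (P^{(t)})_{t≥0} be a weakly ergodic nonhomogeneous Markov chain on a nonempty finite state space S, and suppose there exists a sequence of probability distributions (π^{(t)})_{t≥0} on S such that π^{(t)} P^{(t)} = π^{(t)} for every t and Σ_{t=0}^∞ ‖π^{(t)} − π^{(t+1)}‖₁ < ∞. Then the chain is strongly ergodic: there exists a probability distribution π on S such that for every probability distribution μ on S and every n1 ≥ 0, lim_{n2→∞} ‖μP^{(n1,n2)} − π‖₁ = 0. -/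
open Filter

/-- The product `P^{(n1,n2)} = P^{(n1)} P^{(n1+1)} ⋯ P^{(n2−1)}` of the transition
matrices of a nonhomogeneous Markov chain. -/
noncomputable def Pprod {S : Type*} [Fintype S] [DecidableEq S]
    (P : ℕ → Matrix S S ℝ) (n1 n2 : ℕ) : Matrix S S ℝ :=
  ((List.range (n2 - n1)).map fun t => P (n1 + t)).prod

/-- Weak ergodicity of a nonhomogeneous Markov chain: the initial distribution
is forgotten in the limit. -/
def WeaklyErgodic {S : Type*} [Fintype S] [DecidableEq S]
    (P : ℕ → Matrix S S ℝ) : Prop :=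
  ∀ μ ν : S → ℝ, IsDist μ → IsDist ν → ∀ n1 : ℕ,
    Tendsto (fun n2 => l1 (Matrix.vecMul μ (Pprod P n1 n2)) (Matrix.vecMul ν (Pprod P n1 n2)))
      atTop (nhds 0)

/-!
Fix `n1` and a distribution `μ`. For `n1 ≤ m ≤ n`, split `μ P^{(n1,n)} = (μ P^{(n1,m)}) P^{(m,n)}`
and compare it with `π^{(m)} P^{(m,n)}`, then with `π^{(n)}`, then with `π = lim π^{(t)}`.
The first distance tends to `0` as `n → ∞` by weak ergodicity. Since `π^{(t)}` is stationary for
`P^{(t)}` and stochastic matrices are `ℓ¹`-contractions, the second is at most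
`Σ_{m ≤ t < n} ‖π^{(t)} − π^{(t+1)}‖₁`, a tail of a convergent series. The third tends to `0`
because the summability makes `π^{(t)}` Cauchy.
-/

open Matrix Finset

section L1

variable {S : Type*} [Fintype S]

lemma l1_nonneg (u v : S → ℝ) : 0 ≤ l1 u v :=
  sum_nonneg fun _ _ => abs_nonneg _

lemma l1_self (u : S → ℝ) : l1 u u = 0 := by
  simp [l1]

lemma l1_triangle (u v w : S → ℝ) : l1 u w ≤ l1 u v + l1 v w := by
  rw [l1, l1, l1, ← sum_add_distrib]
  exact sum_le_sum fun k _ => abs_sub_le _ _ _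

lemma dist_le_l1 (u v : S → ℝ) : dist u v ≤ l1 u v :=
  (dist_pi_le_iff (l1_nonneg u v)).2 fun k =>
    single_le_sum (f := fun k => |u k - v k|) (fun _ _ => abs_nonneg _) (mem_univ k)

lemma Filter.Tendsto.l1 {α : Type*} {l : Filter α} {u v : α → S → ℝ} {a b : S → ℝ}
    (hu : Tendsto u l (nhds a)) (hv : Tendsto v l (nhds b)) :
    Tendsto (fun x => l1 (u x) (v x)) l (nhds (l1 a b)) :=
  tendsto_finsetSum _ fun k _ => ((tendsto_pi_nhds.1 hu k).sub (tendsto_pi_nhds.1 hv k)).abs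

lemma exists_tendsto_of_summable_l1 {π : ℕ → S → ℝ}
    (hsum : Summable fun t => l1 (π t) (π (t + 1))) : ∃ πlim, Tendsto π atTop (nhds πlim) :=
  cauchySeq_tendsto_of_complete <| cauchySeq_of_summable_dist <|
    hsum.of_nonneg_of_le (fun _ => dist_nonneg) fun _ => dist_le_l1 _ _

variable [DecidableEq S]

lemma isStochastic_iff_mem_rowStochastic {P : Matrix S S ℝ} :
    IsStochastic P ↔ P ∈ rowStochastic ℝ S :=
  mem_rowStochastic_iff_sum.symm

lemma IsDist.vecMul {μ : S → ℝ} (hμ : IsDist μ) {M : Matrix S S ℝ}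
    (hM : M ∈ rowStochastic ℝ S) : IsDist (μ ᵥ* M) :=
  ⟨nonneg_vecMul_of_mem_rowStochastic hM hμ.1, by
    simpa only [dotProduct_one] using
      vecMul_dotProduct_one_eq_one_rowStochastic hM ((dotProduct_one μ).trans hμ.2)⟩

lemma l1_vecMul_le {M : Matrix S S ℝ} (hM : M ∈ rowStochastic ℝ S) (u v : S → ℝ) :
    l1 (u ᵥ* M) (v ᵥ* M) ≤ l1 u v := by
  have hentry : ∀ k, |(u ᵥ* M) k - (v ᵥ* M) k| ≤ ∑ i, |u i - v i| * M i k := fun k => by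
    rw [← Pi.sub_apply, ← sub_vecMul]
    refine (abs_sum_le_sum_abs _ _).trans_eq (sum_congr rfl fun i _ => ?_)
    rw [abs_mul, abs_of_nonneg (nonneg_of_mem_rowStochastic hM)]
    rfl
  calc l1 (u ᵥ* M) (v ᵥ* M) ≤ ∑ k, ∑ i, |u i - v i| * M i k := sum_le_sum fun k _ => hentry k
    _ = ∑ i, |u i - v i| * ∑ k, M i k := by rw [sum_comm]; simp only [mul_sum]
    _ = l1 u v := by simp only [sum_row_of_mem_rowStochastic hM, mul_one, l1]

end L1

section Pprod

variable {S : Type*} [Fintype S] [DecidableEq S] (P : ℕ → Matrix S S ℝ)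

lemma Pprod_self (n : ℕ) : Pprod P n n = 1 := by
  simp [Pprod]

lemma Pprod_succ {n1 n2 : ℕ} (h : n1 ≤ n2) : Pprod P n1 (n2 + 1) = Pprod P n1 n2 * P n2 := by
  rw [Pprod, Pprod, Nat.sub_add_comm h, List.range_succ, List.map_append, List.prod_append]
  simp [Nat.add_sub_cancel' h]

lemma Pprod_mul_Pprod {n1 m n2 : ℕ} (h1 : n1 ≤ m) (h2 : m ≤ n2) :
    Pprod P n1 m * Pprod P m n2 = Pprod P n1 n2 := by
  induction n2, h2 using Nat.le_induction with
  | base => rw [Pprod_self, Matrix.mul_one]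
  | succ n hmn ih => rw [Pprod_succ P hmn, ← Matrix.mul_assoc, ih, Pprod_succ P (h1.trans hmn)]

variable {P}

lemma Pprod_mem_rowStochastic (hP : ∀ t, P t ∈ rowStochastic ℝ S) (n1 n2 : ℕ) :
    Pprod P n1 n2 ∈ rowStochastic ℝ S :=
  Submonoid.list_prod_mem _ <| List.forall_mem_map.2 fun _ _ => hP _

lemma l1_vecMul_Pprod_le_sum_Ico {π : ℕ → S → ℝ} (hP : ∀ t, P t ∈ rowStochastic ℝ S)
    (hstat : ∀ t, π t ᵥ* P t = π t) {m n : ℕ} (hmn : m ≤ n) :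
    l1 (π m ᵥ* Pprod P m n) (π n) ≤ ∑ t ∈ Ico m n, l1 (π t) (π (t + 1)) := by
  induction n, hmn using Nat.le_induction with
  | base => simp [Pprod_self, l1_self]
  | succ n hmn ih =>
    rw [Pprod_succ P hmn, ← vecMul_vecMul, sum_Ico_succ_top hmn]
    calc l1 ((π m ᵥ* Pprod P m n) ᵥ* P n) (π (n + 1))
        ≤ l1 ((π m ᵥ* Pprod P m n) ᵥ* P n) (π n ᵥ* P n) + l1 (π n) (π (n + 1)) := by
          rw [hstat n]; exact l1_triangle _ _ _
      _ ≤ _ := add_le_add_left ((l1_vecMul_le (hP n) _ _).trans ih) _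

end Pprod

lemma sum_Ico_le_tsum_nat_add {f : ℕ → ℝ} (hf : ∀ t, 0 ≤ f t) (hsum : Summable f) (m n : ℕ) :
    ∑ t ∈ Ico m n, f t ≤ ∑' t, f (t + m) := by
  rw [sum_Ico_eq_sum_range]
  simp_rw [add_comm m]
  exact ((summable_nat_add_iff m).2 hsum).sum_le_tsum _ fun t _ => hf _

lemma tendsto_zero_of_eventually_le_add {α : Type*} {l : Filter α} {a : α → ℝ} {T : ℕ → ℝ}
    (ha : ∀ x, 0 ≤ a x) (hT : Tendsto T atTop (nhds 0))
    (h : ∀ᶠ m in atTop, ∃ b : α → ℝ, Tendsto b l (nhds 0) ∧ ∀ᶠ x in l, a x ≤ b x + T m) :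
    Tendsto a l (nhds 0) := by
  refine tendsto_order.2 ⟨fun ε hε => Eventually.of_forall fun x => hε.trans_le (ha x),
    fun ε hε => ?_⟩
  obtain ⟨m, hTm, b, hb, hab⟩ := ((hT.eventually (gt_mem_nhds (half_pos hε))).and h).exists
  filter_upwards [hb.eventually (gt_mem_nhds (half_pos hε)), hab] with x hbx hax
  linarith

theorem stronglyErgodic_of_weaklyErgodic_general {S : Type*} [Fintype S]
    [DecidableEq S] (P : ℕ → Matrix S S ℝ) (hP : ∀ t, IsStochastic (P t))
    (hweak : WeaklyErgodic P)
    (π : ℕ → S → ℝ) (hπ : ∀ t, IsDist (π t))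
    (hstat : ∀ t, Matrix.vecMul (π t) (P t) = π t)
    (hsum : Summable (fun t => l1 (π t) (π (t + 1)))) :
    ∃ πlim : S → ℝ, IsDist πlim ∧
      ∀ μ : S → ℝ, IsDist μ → ∀ n1 : ℕ,
        Tendsto (fun n2 => l1 (Matrix.vecMul μ (Pprod P n1 n2)) πlim) atTop (nhds 0) := by
  have hP' : ∀ t, P t ∈ rowStochastic ℝ S := fun t => isStochastic_iff_mem_rowStochastic.1 (hP t)
  obtain ⟨πlim, hlim⟩ := exists_tendsto_of_summable_l1 hsum
  refine ⟨πlim, (isClosed_stdSimplex ℝ S).mem_of_tendsto hlim (Eventually.of_forall hπ),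
    fun μ hμ n1 => ?_⟩
  refine tendsto_zero_of_eventually_le_add (fun _ => l1_nonneg _ _) 
    (tendsto_sum_nat_add fun t => l1 (π t) (π (t + 1))) ?_
  filter_upwards [eventually_ge_atTop n1] with m hm
  set μ' := μ ᵥ* Pprod P n1 m
  refine ⟨fun n => l1 (μ' ᵥ* Pprod P m n) (π m ᵥ* Pprod P m n) + l1 (π n) πlim, ?_, ?_⟩
  · have hforget := hweak μ' (π m) (hμ.vecMul (Pprod_mem_rowStochastic hP' n1 m)) (hπ m) m
    simpa only [l1_self, add_zero] using hforget.add (hlim.l1 (tendsto_const_nhds (x := πlim)))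
  · filter_upwards [eventually_ge_atTop m] with n hn
    rw [← Pprod_mul_Pprod P hm hn, ← vecMul_vecMul]
    have hdrift := (l1_vecMul_Pprod_le_sum_Ico hP' hstat hn).trans
      (sum_Ico_le_tsum_nat_add (fun _ => l1_nonneg _ _) hsum m n)
    linarith [l1_triangle (μ' ᵥ* Pprod P m n) (π m ᵥ* Pprod P m n) πlim,
      l1_triangle (π m ᵥ* Pprod P m n) (π n) πlim]

/-- Sufficient condition for strong ergodicity: a weakly ergodic nonhomogeneous
Markov chain with stationary distributions `π^{(t)}` of each `P^{(t)}` satisfying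
`Σ_t ‖π^{(t)} − π^{(t+1)}‖₁ < ∞` is strongly ergodic. -/
theorem stronglyErgodic_of_weaklyErgodic {S : Type*} [Fintype S] [Nonempty S]
    [DecidableEq S] (P : ℕ → Matrix S S ℝ) (hP : ∀ t, IsStochastic (P t))
    (hweak : WeaklyErgodic P)
    (π : ℕ → S → ℝ) (hπ : ∀ t, IsDist (π t))
    (hstat : ∀ t, Matrix.vecMul (π t) (P t) = π t)
    (hsum : Summable (fun t => l1 (π t) (π (t + 1)))) :
    ∃ πlim : S → ℝ, IsDist πlim ∧
      ∀ μ : S → ℝ, IsDist μ → ∀ n1 : ℕ,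
        Tendsto (fun n2 => l1 (Matrix.vecMul μ (Pprod P n1 n2)) πlim) atTop (nhds 0) :=
  stronglyErgodic_of_weaklyErgodic_general P hP hweak π hπ hstat hsum
end

section
/- If y ∉ H (i.e., y is not a global minimizer of E), then β ↦ π_β(y) is eventually nonincreasing: there exists β₀ ≥ 0 such that for all β₀ ≤ β₁ ≤ β₂, π_{β₂}(y) ≤ π_{β₁}(y). -/
/-- The Boltzmann distribution at inverse temperature `β` for the energy `E`. -/
noncomputable def boltzmann {A : Type*} [Fintype A]
    (n : ℕ) (E : (Fin n → A) → ℝ) (β : ℝ) : (Fin n → A) → ℝ :=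
  fun y => Real.exp (-β * E y) / ∑ z : Fin n → A, Real.exp (-β * E z)

/-- The set `H` of global minimizers of the energy `E`. -/
noncomputable def minimizers {A : Type*} [Fintype A]
    (n : ℕ) (E : (Fin n → A) → ℝ) : Finset (Fin n → A) :=
  Finset.univ.filter fun y => ∀ z, E y ≤ E z

/-!
Since `π_β(y) = (∑_z exp (β d_z))⁻¹` with `d_z = E y - E z`, it suffices that
`f β = ∑_z exp (β d_z)` is eventually nondecreasing. Its derivative is `∑_z d_z exp (β d_z)`.
For `β ≥ 0` each term is at least `-|d_z|`, while any `z₀` with `a = d_{z₀} > 0` contributes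
`a exp (β a) ≥ β a²`; so `f' ≥ 0` once `β a² ≥ ∑_z |d_z|`.
-/

open Real Finset Set

section SumExp

variable {ι : Type*} [Fintype ι] (d : ι → ℝ)

lemma hasDerivAt_sum_exp_mul (β : ℝ) :
    HasDerivAt (fun t => ∑ j, exp (t * d j)) (∑ j, d j * exp (β * d j)) β :=
  HasDerivAt.fun_sum fun j _ => by
    simpa [mul_comm] using ((hasDerivAt_id β).mul_const (d j)).exp

lemma neg_abs_le_mul_exp_mul {β x : ℝ} (hβ : 0 ≤ β) : -|x| ≤ x * exp (β * x) := by
  rcases le_or_gt 0 x with hx | hx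
  · linarith [abs_nonneg x, mul_nonneg hx (exp_pos (β * x)).le]
  · have hexp : exp (β * x) ≤ 1 := exp_le_one_iff.2 (mul_nonpos_of_nonneg_of_nonpos hβ hx.le)
    rw [abs_of_neg hx]
    nlinarith

variable {d}

lemma sum_mul_exp_mul_nonneg {i : ι} (hi : 0 < d i) {β : ℝ}
    (hβ : (∑ j, |d j|) / d i ^ 2 ≤ β) : 0 ≤ ∑ j, d j * exp (β * d j) := by
  have hβ₀ : 0 ≤ β := le_trans (by positivity) hβ
  have hS : ∑ j, |d j| ≤ β * d i ^ 2 := (div_le_iff₀ (by positivity)).1 hβ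
  have hlead : β * d i ^ 2 ≤ d i * exp (β * d i) := by
    nlinarith [add_one_le_exp (β * d i)]
  have hsingle : d i * exp (β * d i) + |d i| ≤ ∑ j, (d j * exp (β * d j) + |d j|) :=
    single_le_sum (f := fun j => d j * exp (β * d j) + |d j|)
      (fun j _ => neg_le_iff_add_nonneg.1 (neg_abs_le_mul_exp_mul hβ₀)) (mem_univ i)
  rw [sum_add_distrib] at hsingle
  linarith [abs_nonneg (d i)]

lemma monotoneOn_sum_exp_mul {i : ι} (hi : 0 < d i) :
    MonotoneOn (fun β => ∑ j, exp (β * d j)) (Ici ((∑ j, |d j|) / d i ^ 2)) :=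
  monotoneOn_of_hasDerivWithinAt_nonneg (convex_Ici _)
    (fun β _ => (hasDerivAt_sum_exp_mul d β).continuousAt.continuousWithinAt)
    (fun β _ => (hasDerivAt_sum_exp_mul d β).hasDerivWithinAt)
    (fun _ hβ => sum_mul_exp_mul_nonneg hi (interior_subset hβ))

end SumExp

lemma boltzmann_eq_inv_sum {A : Type*} [Fintype A] (n : ℕ) (E : (Fin n → A) → ℝ) (β : ℝ)
    (y : Fin n → A) : boltzmann n E β y = (∑ z, exp (β * (E y - E z)))⁻¹ := by
  have hsum : ∑ z, exp (β * (E y - E z)) = exp (β * E y) * ∑ z, exp (-β * E z) := by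
    rw [mul_sum]
    refine sum_congr rfl fun z _ => ?_
    rw [← exp_add]
    ring_nf
  rw [boltzmann, hsum, mul_inv, ← exp_neg, div_eq_mul_inv]
  ring_nf

lemma exists_lt_of_not_mem_minimizers {A : Type*} [Fintype A] {n : ℕ} {E : (Fin n → A) → ℝ}
    {y : Fin n → A} (hy : y ∉ minimizers n E) : ∃ z, E z < E y := by
  simpa [minimizers] using hy

theorem boltzmann_eventually_antitone_off_minimizers_general {A : Type*} [Fintype A]
    (n : ℕ) (E : (Fin n → A) → ℝ) (y : Fin n → A)
    (hy : y ∉ minimizers n E) :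
    ∃ β₀ : ℝ, 0 ≤ β₀ ∧
      ∀ β₁ β₂ : ℝ, β₀ ≤ β₁ → β₁ ≤ β₂ → boltzmann n E β₂ y ≤ boltzmann n E β₁ y := by
  obtain ⟨z, hz⟩ := exists_lt_of_not_mem_minimizers hy
  have hgap : 0 < E y - E z := sub_pos.2 hz
  refine ⟨(∑ w, |E y - E w|) / (E y - E z) ^ 2, by positivity, fun β₁ β₂ hβ₁ h₁₂ => ?_⟩
  have hmono := monotoneOn_sum_exp_mul (d := fun w => E y - E w) hgap hβ₁ (le_trans hβ₁ h₁₂) h₁₂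
  rw [boltzmann_eq_inv_sum, boltzmann_eq_inv_sum]
  exact inv_anti₀ (sum_pos (fun w _ => exp_pos _) ⟨y, mem_univ y⟩) hmono

/-- For `y` not a global minimizer of the energy, `β ↦ π_β(y)` is eventually
nonincreasing. -/
theorem boltzmann_eventually_antitone_off_minimizers {A : Type*} [Fintype A] [Nonempty A]
    (n : ℕ) (hn : 0 < n) (E : (Fin n → A) → ℝ) (y : Fin n → A)
    (hy : y ∉ minimizers n E) :
    ∃ β₀ : ℝ, 0 ≤ β₀ ∧
      ∀ β₁ β₂ : ℝ, β₀ ≤ β₁ → β₁ ≤ β₂ → boltzmann n E β₂ y ≤ boltzmann n E β₁ y :=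
  boltzmann_eventually_antitone_off_minimizers_general n E y hy
end

section
/- If (β_t)_{t≥0} is a nondecreasing sequence of nonnegative reals with β_t → ∞, then Σ_{t=0}^∞ ‖π_{β_t} − π_{β_{t+1}}‖₁ < ∞. -/
/-!
Writing `π_b(y) = (P(b) + N(b))⁻¹`, where `P` sums the weights `exp (b (E y - E z))` over the
states `z` with `E z ≤ E y` and `N` over the others, `P ≥ 1` is nondecreasing and `N ≥ 0` is
nonincreasing in `b`. Hence `P⁻¹ + N` is a nonnegative nonincreasing function whose decrements
dominate those of `π_b(y)`, so along a nondecreasing sequence of inverse temperatures the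
increments of each coordinate telescope into a convergent series.
-/

open Filter

theorem summable_sub_succ_of_antitone {u : ℕ → ℝ} (hu : Antitone u) (hu0 : ∀ t, 0 ≤ u t) :
    Summable fun t => u t - u (t + 1) :=
  summable_of_sum_range_le (c := u 0) (fun t => sub_nonneg.2 (hu t.le_succ)) fun m => by
    rw [Finset.sum_range_sub']
    linarith [hu0 m]

theorem summable_abs_sub_of_abs_sub_le_sub {α : Type*} [Preorder α] {f H : α → ℝ}
    (hH : ∀ b, 0 ≤ H b) (hfH : ∀ ⦃b b'⦄, b ≤ b' → |f b - f b'| ≤ H b - H b')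
    {β : ℕ → α} (hβ : Monotone β) :
    Summable fun t => |f (β t) - f (β (t + 1))| := by
  have hHβ : Antitone (H ∘ β) := fun s t hst =>
    sub_nonneg.1 ((abs_nonneg _).trans (hfH (hβ hst)))
  exact (summable_sub_succ_of_antitone hHβ fun t => hH _).of_nonneg_of_le
    (fun t => abs_nonneg _) fun t => hfH (hβ t.le_succ)

theorem abs_inv_add_sub_inv_add_le {P P' N N' : ℝ} (hP : 1 ≤ P) (hPP' : P ≤ P')
    (hN' : 0 ≤ N') (hNN' : N' ≤ N) :
    |(P + N)⁻¹ - (P' + N')⁻¹| ≤ (P⁻¹ + N) - (P'⁻¹ + N') := by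
  have hD : P * P' ≤ (P + N) * (P' + N') := by nlinarith
  have hD1 : 1 ≤ (P + N) * (P' + N') := by nlinarith
  have hD0 : 0 < P * P' := mul_pos (by linarith) (by linarith)
  rw [inv_sub_inv (by linarith) (by linarith), abs_div,
    abs_of_pos (show 0 < (P + N) * (P' + N') by linarith),
    show P' + N' - (P + N) = (P' - P) - (N - N') by ring]
  calc |(P' - P) - (N - N')| / ((P + N) * (P' + N'))
      ≤ ((P' - P) + (N - N')) / ((P + N) * (P' + N')) := by
        gcongr
        exact (abs_sub _ _).trans (by rw [abs_of_nonneg (by linarith), abs_of_nonneg (by linarith)])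
    _ = (P' - P) / ((P + N) * (P' + N')) + (N - N') / ((P + N) * (P' + N')) := add_div _ _ _
    _ ≤ (P' - P) / (P * P') + (N - N') := add_le_add
        (div_le_div_of_nonneg_left (by linarith) hD0 hD) (div_le_self (by linarith) hD1)
    _ = (P⁻¹ + N) - (P'⁻¹ + N') := by rw [← inv_sub_inv (by linarith) (by linarith)]; ring

section Boltzmann

variable {A : Type*} [Fintype A] {n : ℕ} (E : (Fin n → A) → ℝ)

theorem boltzmann_apply_eq_inv_sum (b : ℝ) (y : Fin n → A) :
    boltzmann n E b y = (∑ z, Real.exp (b * (E y - E z)))⁻¹ := by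
  have h : ∀ z, Real.exp (b * (E y - E z)) = Real.exp (-b * E z) / Real.exp (-b * E y) := by
    intro z
    rw [← Real.exp_sub]
    ring_nf
  simp_rw [h, ← Finset.sum_div, inv_div]
  rfl

theorem exists_abs_boltzmann_apply_sub_le_sub (y : Fin n → A) :
    ∃ H : ℝ → ℝ, (∀ b, 0 ≤ H b) ∧
      ∀ ⦃b b'⦄, b ≤ b' → |boltzmann n E b y - boltzmann n E b' y| ≤ H b - H b' := by
  classical
  set w : ℝ → (Fin n → A) → ℝ := fun b z => Real.exp (b * (E y - E z))
  set P : ℝ → ℝ := fun b => ∑ z ∈ Finset.univ.filter (fun z => E z ≤ E y), w b z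
  set N : ℝ → ℝ := fun b => ∑ z ∈ Finset.univ.filter (fun z => ¬ E z ≤ E y), w b z
  have hπ : ∀ b, boltzmann n E b y = (P b + N b)⁻¹ := fun b => by
    rw [boltzmann_apply_eq_inv_sum, Finset.sum_filter_add_sum_filter_not]
  have hP1 : ∀ b, 1 ≤ P b := fun b => calc
    1 = w b y := by simp [w]
    _ ≤ P b := Finset.single_le_sum (f := w b) (fun z _ => (Real.exp_pos _).le)
      (Finset.mem_filter.2 ⟨Finset.mem_univ y, le_refl (E y)⟩)
  have hPmono : Monotone P := fun b b' h => Finset.sum_le_sum fun z hz =>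
    Real.exp_le_exp.2 (mul_le_mul_of_nonneg_right h (sub_nonneg.2 (Finset.mem_filter.1 hz).2))
  have hNanti : Antitone N := fun b b' h => Finset.sum_le_sum fun z hz =>
    Real.exp_le_exp.2 (mul_le_mul_of_nonpos_right h
      (sub_nonpos.2 (not_le.1 (Finset.mem_filter.1 hz).2).le))
  have hN0 : ∀ b, 0 ≤ N b := fun b => Finset.sum_nonneg fun z _ => (Real.exp_pos _).le
  refine ⟨fun b => (P b)⁻¹ + N b, fun b => add_nonneg (inv_nonneg.2 (by linarith [hP1 b])) (hN0 b),
    fun b b' h => ?_⟩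
  rw [hπ, hπ]
  exact abs_inv_add_sub_inv_add_le (hP1 b) (hPmono h) (hN0 b') (hNanti h)

end Boltzmann

theorem boltzmann_increments_summable_general {A : Type*} [Fintype A]
    (n : ℕ) (E : (Fin n → A) → ℝ)
    (β : ℕ → ℝ) (hmono : Monotone β) :
    Summable fun t => l1 (boltzmann n E (β t)) (boltzmann n E (β (t + 1))) := by
  refine summable_sum fun y _ => ?_
  obtain ⟨H, hH, hπH⟩ := exists_abs_boltzmann_apply_sub_le_sub E y
  exact summable_abs_sub_of_abs_sub_le_sub hH hπH hmono

/-- For a nondecreasing sequence of nonnegative inverse temperatures tending to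
infinity, the successive Boltzmann distributions have summable ℓ¹ increments:
`Σ_t ‖π_{β_t} − π_{β_{t+1}}‖₁ < ∞`. -/
theorem boltzmann_increments_summable {A : Type*} [Fintype A] [Nonempty A]
    (n : ℕ) (hn : 0 < n) (E : (Fin n → A) → ℝ)
    (β : ℕ → ℝ) (hβ0 : ∀ t, 0 ≤ β t) (hmono : Monotone β)
    (hβ : Tendsto β atTop atTop) :
    Summable fun t => l1 (boltzmann n E (β t)) (boltzmann n E (β (t + 1))) :=
  boltzmann_increments_summable_general n E β hmono
end
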